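/- Let $V$ be the space of real homogeneous polynomials of degree $k$ in two variables $(u,v)$, and let $A=u\,\partial_v-v\,\partial_u$ act on $V$. If $k$ is odd, then $A$ is a linear isomorphism of $V$. If $k$ is even, then the range of $A$ has codimension one in $V$ and equals the subspace of polynomials $Q\in V$ whose average over circles vanishes, i.e. $\int_0^{2\pi}Q(R\cos\theta,R\sin\theta)\,d\theta=0$ for all $R>0$. -/

import Mathlib

/-!
Along the unit circle `A = u ∂ᵥ - v ∂ᵤ` is the angular derivative:
`d/dθ Q(cos θ, sin θ) = (A Q)(cos θ, sin θ)`. A homogeneous `Q` with `A Q = 0` is therefore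
constant on the circle, and by homogeneity it is `0` when `k` is odd (`Q(-x) = -Q(x)`) and a
multiple of `(u² + v²)^(k/2)` when `k` is even. For odd `k`, `A` is thus an injective, hence
bijective, endomorphism of the finite-dimensional space `V`. For even `k` its range has
codimension one; by the fundamental theorem of calculus it lies in the kernel of
`Q ↦ ∫₀^{2π} Q(cos θ, sin θ) dθ`, a functional that does not vanish on `(u² + v²)^(k/2)`, so the
range is exactly that kernel.
-/

open MvPolynomial Real

noncomputable section

theorem LinearMap.range_eq_ker_of_comp_eq_zero {K V : Type*} [Field K] [AddCommGroup V]
    [Module K V] [FiniteDimensional K V] (f : V →ₗ[K] V) {L : Module.Dual K V} (hL : L ≠ 0)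
    (hLf : L ∘ₗ f = 0) (hf : Module.finrank K (ker f) ≤ 1) : range f = ker L := by
  refine Submodule.eq_of_le_of_finrank_le ?_ ?_
  · rintro _ ⟨v, rfl⟩
    exact LinearMap.congr_fun hLf v
  · have := f.finrank_range_add_finrank_ker
    have := L.finrank_ker_add_one_of_ne_zero hL
    omega

namespace MvPolynomial

variable (R : Type*) [CommRing R]

def angularDerivation : Derivation R (MvPolynomial (Fin 2) R) (MvPolynomial (Fin 2) R) :=
  (X 0 : MvPolynomial (Fin 2) R) • pderiv (R := R) 1 - (X 1 : MvPolynomial (Fin 2) R) • pderiv 0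

variable {R}

theorem angularDerivation_apply (p : MvPolynomial (Fin 2) R) :
    angularDerivation R p = X 0 * pderiv 1 p - X 1 * pderiv 0 p := by
  simp [angularDerivation, smul_eq_mul]

theorem angularDerivation_C (a : R) : angularDerivation R (C a) = 0 :=
  (angularDerivation R).map_algebraMap a

@[simp] theorem angularDerivation_X_zero : angularDerivation R (X 0) = -X 1 := by
  simp [angularDerivation_apply, pderiv_X]

@[simp] theorem angularDerivation_X_one : angularDerivation R (X 1) = X 0 := by
  simp [angularDerivation_apply, pderiv_X]

theorem angularDerivation_sum_sq : angularDerivation R (X 0 ^ 2 + X 1 ^ 2) = 0 := by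
  simp only [map_add, Derivation.leibniz_pow, angularDerivation_X_zero, angularDerivation_X_one,
    nsmul_eq_mul, smul_eq_mul]
  ring

theorem angularDerivation_sum_sq_pow (m : ℕ) :
    angularDerivation R ((X 0 ^ 2 + X 1 ^ 2) ^ m) = 0 := by
  rw [Derivation.leibniz_pow, angularDerivation_sum_sq, smul_zero, smul_zero]

theorem IsHomogeneous.angularDerivation {p : MvPolynomial (Fin 2) R} {k : ℕ}
    (hp : p.IsHomogeneous k) : (angularDerivation R p).IsHomogeneous k := by
  obtain _ | k := k
  · rw [← totalDegree_zero_iff_isHomogeneous, totalDegree_eq_zero_iff_eq_C] at hp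
    rw [hp, angularDerivation_C]
    exact isHomogeneous_zero _ _ _
  · have h (i j : Fin 2) : (X i * pderiv j p).IsHomogeneous (k + 1) := by
      simpa [add_comm] using (isHomogeneous_X R i).mul (hp.pderiv (i := j))
    simpa only [angularDerivation_apply] using (h 0 1).sub (h 1 0)

theorem IsHomogeneous.eval_smul {σ S : Type*} [CommSemiring S] {p : MvPolynomial σ S} {k : ℕ}
    (hp : p.IsHomogeneous k) (r : S) (x : σ → S) : eval (r • x) p = r ^ k * eval x p := by
  rw [eval_eq, eval_eq, Finset.mul_sum]
  refine Finset.sum_congr rfl fun d hd => ?_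
  simp only [Pi.smul_apply, smul_eq_mul, mul_pow, Finset.prod_mul_distrib,
    Finset.prod_pow_eq_pow_sum, ← hp.degree_eq_sum_deg_support hd]
  ring

theorem hasDerivAt_eval_cos_sin (p : MvPolynomial (Fin 2) ℝ) (θ : ℝ) :
    HasDerivAt (fun t => eval ![cos t, sin t] p)
      (eval ![cos θ, sin θ] (angularDerivation ℝ p)) θ := by
  induction p using MvPolynomial.induction_on with
  | C a => simpa [angularDerivation_C] using hasDerivAt_const θ a
  | add p q hp hq => simpa only [map_add] using hp.fun_add hq
  | mul_X p i hp =>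
    have hX : ∀ j : Fin 2, HasDerivAt (fun t => ![cos t, sin t] j)
        (eval ![cos θ, sin θ] (angularDerivation ℝ (X j))) θ :=
      Fin.forall_fin_two.mpr ⟨by simpa using hasDerivAt_cos θ, by simpa using hasDerivAt_sin θ⟩
    simp only [Derivation.leibniz, smul_eq_mul, map_add, map_mul, eval_X]
    exact (hp.fun_mul (hX i)).congr_deriv (by ring)

theorem eval_cos_sin_eq_of_angularDerivation_eq_zero {p : MvPolynomial (Fin 2) ℝ}
    (hp : angularDerivation ℝ p = 0) (θ : ℝ) :
    eval ![cos θ, sin θ] p = eval ![1, 0] p := by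
  have hconst := is_const_of_deriv_eq_zero
    (fun t => (hasDerivAt_eval_cos_sin p t).differentiableAt)
    (fun t => by simp [(hasDerivAt_eval_cos_sin p t).deriv, hp]) θ 0
  simpa using hconst

theorem exists_eq_smul_cos_sin (x : Fin 2 → ℝ) : ∃ r θ : ℝ, x = r • ![cos θ, sin θ] := by
  set z : ℂ := ⟨x 0, x 1⟩
  refine ⟨‖z‖, z.arg, ?_⟩
  ext i
  fin_cases i
  · exact (Complex.norm_mul_cos_arg z).symm
  · exact (Complex.norm_mul_sin_arg z).symm

theorem IsHomogeneous.eq_of_eval_cos_sin {p q : MvPolynomial (Fin 2) ℝ} {k : ℕ}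
    (hp : p.IsHomogeneous k) (hq : q.IsHomogeneous k)
    (h : ∀ θ, eval ![cos θ, sin θ] p = eval ![cos θ, sin θ] q) : p = q :=
  MvPolynomial.funext fun x => by
    obtain ⟨r, θ, rfl⟩ := exists_eq_smul_cos_sin x
    rw [hp.eval_smul, hq.eval_smul, h]

theorem eq_zero_of_angularDerivation_eq_zero_of_odd {p : MvPolynomial (Fin 2) ℝ} {k : ℕ}
    (hk : Odd k) (hp : p.IsHomogeneous k) (hA : angularDerivation ℝ p = 0) : p = 0 := by
  have hpi := eval_cos_sin_eq_of_angularDerivation_eq_zero hA π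
  have hneg : (![cos π, sin π] : Fin 2 → ℝ) = (-1 : ℝ) • ![1, 0] := by simp
  rw [hneg, hp.eval_smul, hk.neg_one_pow] at hpi
  have h10 : eval ![1, 0] p = 0 := by linarith
  refine hp.eq_of_eval_cos_sin (isHomogeneous_zero _ _ _) fun θ => ?_
  rw [eval_cos_sin_eq_of_angularDerivation_eq_zero hA, h10, map_zero]

theorem isHomogeneous_sum_sq_pow (R : Type*) [CommSemiring R] (m : ℕ) :
    ((X 0 ^ 2 + X 1 ^ 2 : MvPolynomial (Fin 2) R) ^ m).IsHomogeneous (m + m) := by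
  simpa [← two_mul, mul_comm] using
    (((isHomogeneous_X R 0).pow 2).add ((isHomogeneous_X R 1).pow 2)).pow m

theorem eq_smul_sum_sq_pow_of_angularDerivation_eq_zero {p : MvPolynomial (Fin 2) ℝ} {m : ℕ}
    (hp : p.IsHomogeneous (m + m)) (hA : angularDerivation ℝ p = 0) :
    p = eval ![1, 0] p • (X 0 ^ 2 + X 1 ^ 2) ^ m := by
  rw [smul_eq_C_mul]
  refine hp.eq_of_eval_cos_sin ((isHomogeneous_sum_sq_pow ℝ m).C_mul _) fun θ => ?_
  simp [eval_cos_sin_eq_of_angularDerivation_eq_zero hA]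

theorem continuous_eval_cos_sin (p : MvPolynomial (Fin 2) ℝ) :
    Continuous fun t => eval ![cos t, sin t] p :=
  continuous_iff_continuousAt.mpr fun t => (hasDerivAt_eval_cos_sin p t).continuousAt

def unitCircleIntegral : MvPolynomial (Fin 2) ℝ →ₗ[ℝ] ℝ where
  toFun p := ∫ θ in 0..2 * π, eval ![cos θ, sin θ] p
  map_add' p q := by
    simp only [map_add]
    exact intervalIntegral.integral_add ((continuous_eval_cos_sin p).intervalIntegrable _ _)
      ((continuous_eval_cos_sin q).intervalIntegrable _ _)
  map_smul' c p := by simp [smul_eq_C_mul]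

theorem unitCircleIntegral_apply (p : MvPolynomial (Fin 2) ℝ) :
    unitCircleIntegral p = ∫ θ in 0..2 * π, eval ![cos θ, sin θ] p := rfl

theorem unitCircleIntegral_angularDerivation (p : MvPolynomial (Fin 2) ℝ) :
    unitCircleIntegral (angularDerivation ℝ p) = 0 := by
  rw [unitCircleIntegral_apply, intervalIntegral.integral_eq_sub_of_hasDerivAt
    (fun θ _ => hasDerivAt_eval_cos_sin p θ)
    ((continuous_eval_cos_sin _).intervalIntegrable _ _)]
  simp

theorem unitCircleIntegral_sum_sq_pow (m : ℕ) :
    unitCircleIntegral ((X 0 ^ 2 + X 1 ^ 2) ^ m) = 2 * π := by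
  simp [unitCircleIntegral_apply]

theorem IsHomogeneous.integral_eval_mul_cos_sin {q : MvPolynomial (Fin 2) ℝ} {k : ℕ}
    (hq : q.IsHomogeneous k) (r : ℝ) :
    ∫ θ in 0..2 * π, eval ![r * cos θ, r * sin θ] q = r ^ k * unitCircleIntegral q := by
  rw [unitCircleIntegral_apply, ← intervalIntegral.integral_const_mul]
  congr! 2 with θ
  rw [← hq.eval_smul]
  simp

instance {σ R : Type*} [CommSemiring R] [Finite σ] (n : ℕ) :
    Module.Finite R (homogeneousSubmodule σ R n) :=
  Module.Finite.iff_fg.mpr (homogeneousSubmodule_fg σ R n)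

def angularDerivationHom (R : Type*) [CommRing R] (k : ℕ) :
    homogeneousSubmodule (Fin 2) R k →ₗ[R] homogeneousSubmodule (Fin 2) R k :=
  (angularDerivation R).toLinearMap.restrict fun _ hp => hp.angularDerivation

@[simp] theorem coe_angularDerivationHom_apply {R : Type*} [CommRing R] {k : ℕ}
    (p : homogeneousSubmodule (Fin 2) R k) :
    (angularDerivationHom R k p : MvPolynomial (Fin 2) R) = angularDerivation R p := rfl

theorem ker_angularDerivationHom_of_odd {k : ℕ} (hk : Odd k) :
    LinearMap.ker (angularDerivationHom ℝ k) = ⊥ :=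
  (Submodule.eq_bot_iff _).mpr fun p hp =>
    Subtype.ext (eq_zero_of_angularDerivation_eq_zero_of_odd hk p.2 (congrArg Subtype.val hp))

theorem finrank_ker_angularDerivationHom_le_one (m : ℕ) :
    Module.finrank ℝ (LinearMap.ker (angularDerivationHom ℝ (m + m))) ≤ 1 := by
  refine finrank_le_one ⟨⟨_, isHomogeneous_sum_sq_pow ℝ m⟩,
    Subtype.ext (angularDerivation_sum_sq_pow m)⟩ fun ⟨⟨p, hp⟩, hA⟩ => ⟨eval ![1, 0] p, ?_⟩
  exact Subtype.ext (Subtype.ext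
    (eq_smul_sum_sq_pow_of_angularDerivation_eq_zero hp (congrArg Subtype.val hA)).symm)

theorem existsUnique_angularDerivation_eq_of_odd {k : ℕ} (hk : Odd k)
    {q : MvPolynomial (Fin 2) ℝ} (hq : q ∈ homogeneousSubmodule (Fin 2) ℝ k) :
    ∃! p, p ∈ homogeneousSubmodule (Fin 2) ℝ k ∧ angularDerivation ℝ p = q := by
  have hinj : Function.Injective (angularDerivationHom ℝ k) :=
    LinearMap.ker_eq_bot.mp (ker_angularDerivationHom_of_odd hk)
  obtain ⟨⟨p, hp⟩, hpq⟩ := LinearMap.injective_iff_surjective.mp hinj ⟨q, hq⟩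
  refine ⟨p, ⟨hp, congrArg Subtype.val hpq⟩, fun p' ⟨hp', hp'q⟩ => ?_⟩
  have : angularDerivationHom ℝ k ⟨p', hp'⟩ = angularDerivationHom ℝ k ⟨p, hp⟩ :=
    Subtype.ext (hp'q.trans (congrArg Subtype.val hpq).symm)
  exact congrArg Subtype.val (hinj this)

theorem exists_angularDerivation_eq_iff_of_even {k : ℕ} (hk : Even k)
    {q : MvPolynomial (Fin 2) ℝ} (hq : q ∈ homogeneousSubmodule (Fin 2) ℝ k) :
    (∃ p ∈ homogeneousSubmodule (Fin 2) ℝ k, angularDerivation ℝ p = q) ↔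
      unitCircleIntegral q = 0 := by
  obtain ⟨m, rfl⟩ := hk
  set L := unitCircleIntegral.domRestrict (homogeneousSubmodule (Fin 2) ℝ (m + m))
  have hL : L ≠ 0 := fun h => by
    simpa [L, unitCircleIntegral_sum_sq_pow, pi_ne_zero] using
      LinearMap.congr_fun h ⟨_, isHomogeneous_sum_sq_pow ℝ m⟩
  have hrange := (angularDerivationHom ℝ (m + m)).range_eq_ker_of_comp_eq_zero hL
    (LinearMap.ext fun p => unitCircleIntegral_angularDerivation p)
    (finrank_ker_angularDerivationHom_le_one m)
  have := congrArg (⟨q, hq⟩ ∈ ·) hrange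
  simpa [L, Subtype.ext_iff] using this

theorem forall_integral_eval_mul_cos_sin_eq_zero_iff {q : MvPolynomial (Fin 2) ℝ} {k : ℕ}
    (hq : q.IsHomogeneous k) :
    (∀ r : ℝ, 0 < r → ∫ θ in 0..2 * π, eval ![r * cos θ, r * sin θ] q = 0) ↔
      unitCircleIntegral q = 0 := by
  simp only [hq.integral_eval_mul_cos_sin]
  exact ⟨fun h => by simpa using h 1 one_pos, fun h r _ => by rw [h, mul_zero]⟩

theorem not_exists_angularDerivation_eq_sum_sq_pow (m : ℕ) :
    ¬ ∃ p ∈ homogeneousSubmodule (Fin 2) ℝ (m + m),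
      angularDerivation ℝ p = (X 0 ^ 2 + X 1 ^ 2) ^ m := by
  rw [exists_angularDerivation_eq_iff_of_even ⟨m, rfl⟩ (isHomogeneous_sum_sq_pow ℝ m),
    unitCircleIntegral_sum_sq_pow]
  exact mul_ne_zero two_ne_zero pi_ne_zero

theorem exists_eq_smul_sum_sq_pow_add_angularDerivation {m : ℕ} {g : MvPolynomial (Fin 2) ℝ}
    (hg : g ∈ homogeneousSubmodule (Fin 2) ℝ (m + m)) :
    ∃ c : ℝ, ∃ p ∈ homogeneousSubmodule (Fin 2) ℝ (m + m),
      g = c • (X 0 ^ 2 + X 1 ^ 2) ^ m + angularDerivation ℝ p := by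
  set c := unitCircleIntegral g / (2 * π)
  have hgc : unitCircleIntegral (g - c • (X 0 ^ 2 + X 1 ^ 2) ^ m) = 0 := by
    simp [unitCircleIntegral_sum_sq_pow, c, pi_ne_zero]
  obtain ⟨p, hp, hpg⟩ := (exists_angularDerivation_eq_iff_of_even ⟨m, rfl⟩
    (sub_mem hg (Submodule.smul_mem _ c (isHomogeneous_sum_sq_pow ℝ m)))).mpr hgc
  exact ⟨c, p, hp, by rw [hpg, add_sub_cancel]⟩

end MvPolynomial

/-- The operator `A = u∂ᵥ − v∂ᵤ` preserves the space `V` of real homogeneous polynomials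
of degree `k` in two variables `(u,v)`; if `k` is odd it is a linear isomorphism of `V`;
if `k` is even its range on `V` equals the subspace of polynomials of zero average on all
circles, and this range has codimension one in `V` (there is `Q₀ ∈ V` not in the range
such that every `g ∈ V` is `c•Q₀` plus an element of the range). -/
theorem stmt9 (k : ℕ)
    (A : MvPolynomial (Fin 2) ℝ → MvPolynomial (Fin 2) ℝ)
    (hA : ∀ p, A p = X 0 * pderiv 1 p - X 1 * pderiv 0 p) :
    (∀ p ∈ homogeneousSubmodule (Fin 2) ℝ k, A p ∈ homogeneousSubmodule (Fin 2) ℝ k) ∧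
    (Odd k → ∀ q ∈ homogeneousSubmodule (Fin 2) ℝ k,
      ∃! p, p ∈ homogeneousSubmodule (Fin 2) ℝ k ∧ A p = q) ∧
    (Even k →
      ({q | q ∈ homogeneousSubmodule (Fin 2) ℝ k ∧
          ∃ p ∈ homogeneousSubmodule (Fin 2) ℝ k, A p = q} =
        {q | q ∈ homogeneousSubmodule (Fin 2) ℝ k ∧ ∀ R : ℝ, 0 < R →
          (∫ θ in (0:ℝ)..(2 * Real.pi),
            MvPolynomial.eval ![R * Real.cos θ, R * Real.sin θ] q) = 0}) ∧
      ∃ Q₀ ∈ homogeneousSubmodule (Fin 2) ℝ k,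
        (¬ ∃ p ∈ homogeneousSubmodule (Fin 2) ℝ k, A p = Q₀) ∧
        ∀ g ∈ homogeneousSubmodule (Fin 2) ℝ k,
          ∃ c : ℝ, ∃ p ∈ homogeneousSubmodule (Fin 2) ℝ k, g = c • Q₀ + A p) := by
  obtain rfl : A = ⇑(angularDerivation ℝ) := funext fun p => by rw [hA, angularDerivation_apply]
  refine ⟨fun p hp => hp.angularDerivation,
    fun hk q hq => existsUnique_angularDerivation_eq_of_odd hk hq, fun hk => ⟨?_, ?_⟩⟩
  · ext q
    exact and_congr_right fun hq => (exists_angularDerivation_eq_iff_of_even hk hq).trans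
      (forall_integral_eval_mul_cos_sin_eq_zero_iff hq).symm
  · obtain ⟨m, rfl⟩ := hk
    exact ⟨_, isHomogeneous_sum_sq_pow ℝ m, not_exists_angularDerivation_eq_sum_sq_pow m,
      fun g hg => exists_eq_smul_sum_sq_pow_add_angularDerivation hg⟩
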